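/- There exists a positive constant U, depending only on S, A, γ, D_S, and D_A, such that for any transition function τ, any initial state distribution μ0, any reward functions R1, R2 for which D^EPIC(R1,R2) is defined (i.e., C^EPIC(R1) and C^EPIC(R2) have nonzero variance under the sampling distribution), and any policies π1, π2 with J_{R2}(π2) ≥ J_{R2}(π1), one has J_{R1}(π1) − J_{R1}(π2) ≤ U · ‖R1‖_2 · D^EPIC(R1,R2), where ‖R1‖_2 = √(∑_{(s,a,s')} R1(s,a,s')²). -/

import Mathlib

namespace RewardPaper

/-- A probability distribution on a finite type, represented as a function. -/
def IsDist {X : Type*} [Fintype X] (p : X → ℝ) : Prop :=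
  (∀ x, 0 ≤ p x) ∧ (∑ x, p x) = 1

/-- Reward functions on `S × A × S`. -/
abbrev Reward (S A : Type*) := S → A → S → ℝ

/-- A policy assigns to each state a probability distribution over actions. -/
def IsPolicy {S A : Type*} [Fintype A] (π : S → A → ℝ) : Prop := ∀ s, IsDist (π s)

/-- The type of policies. -/
abbrev Policy (S A : Type*) [Fintype A] := {π : S → A → ℝ // IsPolicy π}

/-- The distribution over states at time `t` of the Markov chain induced by
`τ`, `μ0` and the policy `π`. -/
noncomputable def stateDist {S A : Type*} [Fintype S] [Fintype A]
    (τ : S → A → S → ℝ) (μ0 : S → ℝ) (π : S → A → ℝ) : ℕ → S → ℝ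
  | 0 => μ0
  | (t + 1) => fun s' => ∑ s, ∑ a, stateDist τ μ0 π t s * π s a * τ s a s'

/-- Policy evaluation function `J_R(π)`: expected discounted return of `π` under `R`. -/
noncomputable def J {S A : Type*} [Fintype S] [Fintype A]
    (τ : S → A → S → ℝ) (μ0 : S → ℝ) (γ : ℝ) (R : Reward S A)
    (π : S → A → ℝ) : ℝ :=
  ∑' t : ℕ, γ ^ t * ∑ s, ∑ a, ∑ s', stateDist τ μ0 π t s * π s a * τ s a s' * R s a s'

/-- The value function `V^π_R(s)`: expected discounted return starting from `s`. -/
noncomputable def V {S A : Type*} [Fintype S] [Fintype A] [DecidableEq S]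
    (τ : S → A → S → ℝ) (γ : ℝ) (R : Reward S A) (π : S → A → ℝ) (s : S) : ℝ :=
  J τ (fun s0 => if s0 = s then 1 else 0) γ R π

/-- Every state is reachable with positive probability under `τ` from `μ0`. -/
def AllReachable {S A : Type*} [Fintype S] [Fintype A]
    (τ : S → A → S → ℝ) (μ0 : S → ℝ) : Prop :=
  ∀ s, ∃ (π : S → A → ℝ) (t : ℕ), IsPolicy π ∧ 0 < stateDist τ μ0 π t s

/-- `R2` is produced by potential shaping of `R1`. -/
def PotentialShaping {S A : Type*} (γ : ℝ) (R1 R2 : Reward S A) : Prop :=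
  ∃ Φ : S → ℝ, ∀ s a s', R2 s a s' = R1 s a s' + γ * Φ s' - Φ s

/-- `R1` and `R2` differ by S'-redistribution with respect to `τ`. -/
def SRedist {S A : Type*} [Fintype S] (τ : S → A → S → ℝ) (R1 R2 : Reward S A) : Prop :=
  ∀ s a, (∑ s', τ s a s' * R1 s a s') = (∑ s', τ s a s' * R2 s a s')

/-- `R1` and `R2` differ by (a composition of) potential shaping and S'-redistribution. -/
def DifferBy {S A : Type*} [Fintype S] (γ : ℝ) (τ : S → A → S → ℝ)
    (R1 R2 : Reward S A) : Prop :=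
  ∃ R' : Reward S A, PotentialShaping γ R1 R' ∧ SRedist τ R' R2

/-- A canonicalisation function. -/
def IsCanon {S A : Type*} [Fintype S] (γ : ℝ) (τ : S → A → S → ℝ)
    (c : Reward S A → Reward S A) : Prop :=
  IsLinearMap ℝ c ∧ (∀ R, DifferBy γ τ R (c R)) ∧
    ∀ R1 R2, c R1 = c R2 ↔ DifferBy γ τ R1 R2

/-- `n` is a norm on the subset `X` of reward space. -/
def IsNormOn {S A : Type*} (X : Set (Reward S A)) (n : Reward S A → ℝ) : Prop :=
  (∀ x ∈ X, 0 ≤ n x) ∧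
  (∀ x ∈ X, (n x = 0 ↔ x = 0)) ∧
  (∀ x ∈ X, ∀ r : ℝ, n (r • x) = |r| * n x) ∧
  (∀ x ∈ X, ∀ y ∈ X, n (x + y) ≤ n x + n y)

/-- `p` is a norm on all of reward space. -/
def IsNorm {S A : Type*} (p : Reward S A → ℝ) : Prop := IsNormOn Set.univ p

/-- `m` is a metric on the subset `X` of reward space. -/
def IsMetricOn {S A : Type*} (X : Set (Reward S A)) (m : Reward S A → Reward S A → ℝ) : Prop :=
  (∀ x ∈ X, m x x = 0) ∧ (∀ x ∈ X, ∀ y ∈ X, 0 ≤ m x y) ∧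
  (∀ x ∈ X, ∀ y ∈ X, m x y = m y x) ∧
  (∀ x ∈ X, ∀ y ∈ X, ∀ z ∈ X, m x z ≤ m x y + m y z)

/-- `m` is an admissible metric on `X`: a metric bilipschitz equivalent to some norm. -/
def IsAdmissibleOn {S A : Type*} (X : Set (Reward S A))
    (m : Reward S A → Reward S A → ℝ) : Prop :=
  IsMetricOn X m ∧
  ∃ (p : Reward S A → ℝ) (l u : ℝ), IsNorm p ∧ 0 < l ∧ 0 < u ∧
    ∀ x ∈ X, ∀ y ∈ X, l * p (x - y) ≤ m x y ∧ m x y ≤ u * p (x - y)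

/-- `d` is a STARC metric. -/
def IsSTARC {S A : Type*} [Fintype S] (γ : ℝ) (τ : S → A → S → ℝ)
    (d : Reward S A → Reward S A → ℝ) : Prop :=
  ∃ (c : Reward S A → Reward S A) (n : Reward S A → ℝ)
    (m : Reward S A → Reward S A → ℝ) (s : Reward S A → Reward S A),
    IsCanon γ τ c ∧ IsNormOn (Set.range c) n ∧
    (∀ R, (n (c R) = 0 → s R = c R) ∧ (n (c R) ≠ 0 → s R = (n (c R))⁻¹ • c R)) ∧
    IsAdmissibleOn (Set.range s) m ∧
    ∀ R1 R2, d R1 R2 = m (s R1) (s R2)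

/-- An EPIC-like canonicalisation function: standardises potential shaping only. -/
def IsEpicLikeCanon {S A : Type*} (γ : ℝ) (c : Reward S A → Reward S A) : Prop :=
  IsLinearMap ℝ c ∧ (∀ R, PotentialShaping γ R (c R)) ∧
    ∀ R1 R2, c R1 = c R2 ↔ PotentialShaping γ R1 R2

/-- `d` is an EPIC-like metric. -/
def IsEpicLike {S A : Type*} (γ : ℝ) (d : Reward S A → Reward S A → ℝ) : Prop :=
  ∃ (c : Reward S A → Reward S A) (n : Reward S A → ℝ)
    (m : Reward S A → Reward S A → ℝ) (s : Reward S A → Reward S A),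
    IsEpicLikeCanon γ c ∧ IsNormOn (Set.range c) n ∧
    (∀ R, (n (c R) = 0 → s R = c R) ∧ (n (c R) ≠ 0 → s R = (n (c R))⁻¹ • c R)) ∧
    IsAdmissibleOn (Set.range c) m ∧
    ∀ R1 R2, d R1 R2 = m (s R1) (s R2)

/-- The maximal value of `J_R` over all policies. -/
noncomputable def maxJ {S A : Type*} [Fintype S] [Fintype A]
    (τ : S → A → S → ℝ) (μ0 : S → ℝ) (γ : ℝ) (R : Reward S A) : ℝ :=
  ⨆ π : Policy S A, J τ μ0 γ R π.1

/-- The minimal value of `J_R` over all policies. -/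
noncomputable def minJ {S A : Type*} [Fintype S] [Fintype A]
    (τ : S → A → S → ℝ) (μ0 : S → ℝ) (γ : ℝ) (R : Reward S A) : ℝ :=
  ⨅ π : Policy S A, J τ μ0 γ R π.1

/-- `R1` and `R2` induce the same ordering of policies. -/
def SameOrder {S A : Type*} [Fintype S] [Fintype A]
    (τ : S → A → S → ℝ) (μ0 : S → ℝ) (γ : ℝ) (R1 R2 : Reward S A) : Prop :=
  ∀ π π' : Policy S A,
    (J τ μ0 γ R1 π.1 ≤ J τ μ0 γ R1 π'.1 ↔ J τ μ0 γ R2 π.1 ≤ J τ μ0 γ R2 π'.1)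

/-- Soundness of a pseudometric on reward space. -/
def Sound {S A : Type*} [Fintype S] [Fintype A]
    (τ : S → A → S → ℝ) (μ0 : S → ℝ) (γ : ℝ)
    (d : Reward S A → Reward S A → ℝ) : Prop :=
  ∃ U : ℝ, 0 < U ∧ ∀ (R1 R2 : Reward S A) (π1 π2 : Policy S A),
    J τ μ0 γ R2 π1.1 ≤ J τ μ0 γ R2 π2.1 →
    J τ μ0 γ R1 π1.1 - J τ μ0 γ R1 π2.1 ≤
      U * (maxJ τ μ0 γ R1 - minJ τ μ0 γ R1) * d R1 R2

/-- Completeness of a pseudometric on reward space. -/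
def Complete {S A : Type*} [Fintype S] [Fintype A]
    (τ : S → A → S → ℝ) (μ0 : S → ℝ) (γ : ℝ)
    (d : Reward S A → Reward S A → ℝ) : Prop :=
  (∃ L : ℝ, 0 < L ∧ ∀ R1 R2 : Reward S A, ∃ π1 π2 : Policy S A,
    J τ μ0 γ R2 π1.1 ≤ J τ μ0 γ R2 π2.1 ∧
    L * (maxJ τ μ0 γ R1 - minJ τ μ0 γ R1) * d R1 R2 ≤
      J τ μ0 γ R1 π1.1 - J τ μ0 γ R1 π2.1) ∧
  ∀ R1 R2 : Reward S A, SameOrder τ μ0 γ R1 R2 → d R1 R2 = 0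

/-- `d` is a pseudometric on reward space. -/
def IsPseudometric {S A : Type*} (d : Reward S A → Reward S A → ℝ) : Prop :=
  (∀ x, d x x = 0) ∧ (∀ x y, 0 ≤ d x y) ∧ (∀ x y, d x y = d y x) ∧
    ∀ x y z, d x z ≤ d x y + d y z

/-- The EPIC canonicalisation. -/
noncomputable def CEpic {S A : Type*} [Fintype S] [Fintype A]
    (DS : S → ℝ) (DA : A → ℝ) (γ : ℝ) (R : Reward S A) : Reward S A :=
  fun s a s' =>
    R s a s'
      + γ * (∑ a', ∑ σ', DA a' * DS σ' * R s' a' σ')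
      - (∑ a', ∑ σ', DA a' * DS σ' * R s a' σ')
      - γ * (∑ σ, ∑ a', ∑ σ', DS σ * DA a' * DS σ' * R σ a' σ')

/-- Mean of `f(S,A,S')` with `S,S' ~ DS` and `A ~ DA` independent. -/
noncomputable def meanD {S A : Type*} [Fintype S] [Fintype A]
    (DS : S → ℝ) (DA : A → ℝ) (f : Reward S A) : ℝ :=
  ∑ s, ∑ a, ∑ s', DS s * DA a * DS s' * f s a s'

/-- Covariance of `f(S,A,S')` and `g(S,A,S')`. -/
noncomputable def covD {S A : Type*} [Fintype S] [Fintype A]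
    (DS : S → ℝ) (DA : A → ℝ) (f g : Reward S A) : ℝ :=
  ∑ s, ∑ a, ∑ s', DS s * DA a * DS s' *
    (f s a s' - meanD DS DA f) * (g s a s' - meanD DS DA g)

/-- Variance of `f(S,A,S')`. -/
noncomputable def varD {S A : Type*} [Fintype S] [Fintype A]
    (DS : S → ℝ) (DA : A → ℝ) (f : Reward S A) : ℝ :=
  covD DS DA f f

/-- Pearson correlation of `f(S,A,S')` and `g(S,A,S')`. -/
noncomputable def pearsonD {S A : Type*} [Fintype S] [Fintype A]
    (DS : S → ℝ) (DA : A → ℝ) (f g : Reward S A) : ℝ :=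
  covD DS DA f g / (Real.sqrt (varD DS DA f) * Real.sqrt (varD DS DA g))

/-- The EPIC distance. -/
noncomputable def DEpic {S A : Type*} [Fintype S] [Fintype A]
    (DS : S → ℝ) (DA : A → ℝ) (γ : ℝ) (R1 R2 : Reward S A) : ℝ :=
  Real.sqrt ((1 - pearsonD DS DA (CEpic DS DA γ R1) (CEpic DS DA γ R2)) / 2)

/-- The DARD canonicalisation. -/
noncomputable def CDard {S A : Type*} [Fintype S] [Fintype A]
    (τ : S → A → S → ℝ) (DA : A → ℝ) (γ : ℝ) (R : Reward S A) : Reward S A :=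
  fun s a s' =>
    R s a s' + ∑ a', DA a' *
      (γ * (∑ σ'', τ s' a' σ'' * R s' a' σ'')
        - (∑ σ', τ s a' σ' * R s a' σ')
        - γ * (∑ σ', ∑ σ'', τ s a' σ' * τ s' a' σ'' * R σ' a' σ''))

/-- The DARD distance. -/
noncomputable def DDard {S A : Type*} [Fintype S] [Fintype A]
    (τ : S → A → S → ℝ) (DS : S → ℝ) (DA : A → ℝ) (γ : ℝ) (R1 R2 : Reward S A) : ℝ :=
  Real.sqrt ((1 - pearsonD DS DA (CDard τ DA γ R1) (CDard τ DA γ R2)) / 2)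

/-- The (unweighted) L2 norm on reward space. -/
noncomputable def l2Norm {S A : Type*} [Fintype S] [Fintype A] (R : Reward S A) : ℝ :=
  Real.sqrt (∑ s, ∑ a, ∑ s', (R s a s') ^ 2)

/-- A weighted L2 norm on reward space. -/
noncomputable def weightedL2 {S A : Type*} [Fintype S] [Fintype A]
    (w : S → A → S → ℝ) (R : Reward S A) : ℝ :=
  Real.sqrt (∑ s, ∑ a, ∑ s', w s a s' * (R s a s') ^ 2)

/-- The L2 norm weighted by the product distribution `DS ⊗ DA ⊗ DS`. -/
noncomputable def l2NormD {S A : Type*} [Fintype S] [Fintype A]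
    (DS : S → ℝ) (DA : A → ℝ) (R : Reward S A) : ℝ :=
  Real.sqrt (∑ s, ∑ a, ∑ s', DS s * DA a * DS s' * (R s a s') ^ 2)

/-- Expected discounted return of a reward function along a sequence of per-timestep
transition distributions. -/
noncomputable def Eret {S A : Type*} [Fintype S] [Fintype A]
    (γ : ℝ) (R : Reward S A) (p : ℕ → (S × A × S) → ℝ) : ℝ :=
  ∑' t : ℕ, γ ^ t * ∑ x : S × A × S, p t x * R x.1 x.2.1 x.2.2

/-!
`CEpic R` is `R` plus a potential-shaping term and a constant, and neither changes the
difference `J_R(π1) - J_R(π2)`; moreover `CEpic R` is centred under `DS ⊗ DA ⊗ DS`. For centred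
`C1`, `C2` the law of cosines gives `‖C1 - c • C2‖ = 2 ‖C1‖ D^EPIC` in the weighted `L²` norm,
where `c = ‖C1‖ / ‖C2‖ ≥ 0`. Splitting `C1 = (C1 - c • C2) + c • C2`, the second summand can only
favour `π2`, while the first is bounded pointwise by its weighted norm over `√w`, `w` the smallest
weight, so it moves `J` by at most that bound over `1 - γ`. Finally `‖C1‖ ≤ sup |C1| ≤ 4 ‖R1‖₂`.
-/

namespace IsDist

variable {X : Type*} [Fintype X] {p : X → ℝ}

lemma sum_mul_const (hp : IsDist p) (c : ℝ) : ∑ x, p x * c = c := by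
  rw [← Finset.sum_mul, hp.2, one_mul]

lemma sum_mul_le (hp : IsDist p) {f : X → ℝ} {B : ℝ} (hf : ∀ x, f x ≤ B) :
    ∑ x, p x * f x ≤ B :=
  (Finset.sum_le_sum fun x _ => mul_le_mul_of_nonneg_left (hf x) (hp.1 x)).trans_eq
    (hp.sum_mul_const B)

lemma abs_sum_mul_le (hp : IsDist p) {f : X → ℝ} {B : ℝ} (hf : ∀ x, |f x| ≤ B) :
    |∑ x, p x * f x| ≤ B := by
  refine abs_le.2 ⟨?_, hp.sum_mul_le fun x => (le_abs_self _).trans (hf x)⟩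
  have := hp.sum_mul_le (f := fun x => -f x) fun x => (neg_le_abs _).trans (hf x)
  simp only [mul_neg, Finset.sum_neg_distrib] at this
  linarith

end IsDist

section Expect3

variable {S A : Type*} [Fintype S] [Fintype A]

/-- The expectation of `f (s, a, s')` when `s ~ p`, `a ~ q s` and `s' ~ r s a`. -/
noncomputable def expect3 (p : S → ℝ) (q : S → A → ℝ) (r : S → A → S → ℝ) (f : Reward S A) :
    ℝ :=
  ∑ s, ∑ a, ∑ s', p s * q s a * r s a s' * f s a s'

variable {p : S → ℝ} {q : S → A → ℝ} {r : S → A → S → ℝ}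

lemma expect3_eq_nested (f : Reward S A) :
    expect3 p q r f = ∑ s, p s * ∑ a, q s a * ∑ s', r s a s' * f s a s' := by
  simp only [expect3, Finset.mul_sum, mul_assoc]

lemma expect3_add (f g : Reward S A) :
    expect3 p q r (f + g) = expect3 p q r f + expect3 p q r g := by
  simp only [expect3, Pi.add_apply, mul_add, Finset.sum_add_distrib]

lemma expect3_smul (c : ℝ) (f : Reward S A) : expect3 p q r (c • f) = c * expect3 p q r f := by
  simp only [expect3, Pi.smul_apply, smul_eq_mul, Finset.mul_sum]
  exact Finset.sum_congr rfl fun _ _ => Finset.sum_congr rfl fun _ _ =>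
    Finset.sum_congr rfl fun _ _ => by ring

lemma expect3_nonneg (hp : ∀ s, 0 ≤ p s) (hq : ∀ s a, 0 ≤ q s a) (hr : ∀ s a s', 0 ≤ r s a s')
    {f : Reward S A} (hf : ∀ s a s', 0 ≤ f s a s') : 0 ≤ expect3 p q r f :=
  Finset.sum_nonneg fun s _ => Finset.sum_nonneg fun a _ => Finset.sum_nonneg fun s' _ =>
    mul_nonneg (mul_nonneg (mul_nonneg (hp s) (hq s a)) (hr s a s')) (hf s a s')

lemma expect3_fst (hq : ∀ s, IsDist (q s)) (hr : ∀ s a, IsDist (r s a)) (φ : S → ℝ) :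
    expect3 p q r (fun s _ _ => φ s) = ∑ s, p s * φ s := by
  simp only [expect3_eq_nested, (hr _ _).sum_mul_const, (hq _).sum_mul_const]

lemma expect3_snd (f : S → ℝ) :
    expect3 p q r (fun _ _ s' => f s') = ∑ s', (∑ s, ∑ a, p s * q s a * r s a s') * f s' := by
  simp only [expect3, Finset.sum_mul]
  rw [Finset.sum_comm (s := Finset.univ (α := S)) (t := Finset.univ (α := S))]
  exact Finset.sum_congr rfl fun _ _ => Finset.sum_comm

lemma expect3_const (hp : IsDist p) (hq : ∀ s, IsDist (q s)) (hr : ∀ s a, IsDist (r s a))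
    (c : ℝ) : expect3 p q r (fun _ _ _ => c) = c := by
  rw [expect3_fst hq hr (fun _ => c), hp.sum_mul_const]

lemma expect3_le (hp : IsDist p) (hq : ∀ s, IsDist (q s)) (hr : ∀ s a, IsDist (r s a))
    {f : Reward S A} {B : ℝ} (hf : ∀ s a s', f s a s' ≤ B) : expect3 p q r f ≤ B := by
  rw [expect3_eq_nested]
  exact hp.sum_mul_le fun s => (hq s).sum_mul_le fun a => (hr s a).sum_mul_le (hf s a)

lemma abs_expect3_le (hp : IsDist p) (hq : ∀ s, IsDist (q s)) (hr : ∀ s a, IsDist (r s a))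
    {f : Reward S A} {B : ℝ} (hf : ∀ s a s', |f s a s'| ≤ B) : |expect3 p q r f| ≤ B := by
  rw [expect3_eq_nested]
  exact hp.abs_sum_mul_le fun s => (hq s).abs_sum_mul_le fun a => (hr s a).abs_sum_mul_le (hf s a)

lemma mul_le_expect3 (hp : ∀ s, 0 ≤ p s) (hq : ∀ s a, 0 ≤ q s a) (hr : ∀ s a s', 0 ≤ r s a s')
    {f : Reward S A} (hf : ∀ s a s', 0 ≤ f s a s') (s : S) (a : A) (s' : S) :
    p s * q s a * r s a s' * f s a s' ≤ expect3 p q r f := by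
  have hw : ∀ s a s', 0 ≤ p s * q s a * r s a s' * f s a s' := fun s a s' =>
    mul_nonneg (mul_nonneg (mul_nonneg (hp s) (hq s a)) (hr s a s')) (hf s a s')
  simpa only [expect3, Fintype.sum_prod_type] using
    Finset.single_le_sum (fun x _ => hw x.1 x.2.1 x.2.2) (Finset.mem_univ (s, a, s'))

lemma abs_le_l2Norm (R : Reward S A) (s : S) (a : A) (s' : S) : |R s a s'| ≤ l2Norm R := by
  rw [← Real.sqrt_sq_eq_abs]
  refine Real.sqrt_le_sqrt ?_
  simpa only [Fintype.sum_prod_type] using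
    Finset.single_le_sum (f := fun x : S × A × S => R x.1 x.2.1 x.2.2 ^ 2)
      (fun x _ => sq_nonneg _) (Finset.mem_univ (s, a, s'))

end Expect3

lemma tsum_succ_sub_eq_neg {G : Type*} [AddCommGroup G] [TopologicalSpace G]
    [IsTopologicalAddGroup G] [T2Space G] {b : ℕ → G} (hb : Summable b) :
    ∑' n, (b (n + 1) - b n) = -b 0 := by
  rw [Summable.tsum_sub ((summable_nat_add_iff 1).2 hb) hb, hb.tsum_eq_zero_add]
  abel

def shaping {S A : Type*} (γ : ℝ) (Φ : S → ℝ) : Reward S A := fun s _ s' => γ * Φ s' - Φ s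

section PolicyEvaluation

variable {S A : Type*} [Fintype S] [Fintype A] {τ : S → A → S → ℝ} {μ0 : S → ℝ}
  {π : S → A → ℝ} {γ : ℝ}

lemma expect3_shaping {p : S → ℝ} {q : S → A → ℝ} {r : S → A → S → ℝ} (Φ : S → ℝ) :
    expect3 p q r (shaping γ Φ) =
      γ * expect3 p q r (fun _ _ s' => Φ s') - expect3 p q r (fun s _ _ => Φ s) := by
  simp only [expect3, shaping, mul_sub, Finset.sum_sub_distrib, Finset.mul_sum, mul_left_comm _ γ]

lemma isDist_stateDist (hτ : ∀ s a, IsDist (τ s a)) (hμ0 : IsDist μ0) (hπ : IsPolicy π) :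
    ∀ t, IsDist (stateDist τ μ0 π t)
  | 0 => hμ0
  | t + 1 => by
    have ih := isDist_stateDist hτ hμ0 hπ t
    refine ⟨fun s' => Finset.sum_nonneg fun s _ => Finset.sum_nonneg fun a _ =>
      mul_nonneg (mul_nonneg (ih.1 s) ((hπ s).1 a)) ((hτ s a).1 s'), ?_⟩
    have h := expect3_snd (p := stateDist τ μ0 π t) (q := π) (r := τ) fun _ => (1 : ℝ)
    rw [expect3_const ih hπ hτ] at h
    simp only [mul_one] at h
    exact h.symm

lemma expect3_stateDist_snd (hτ : ∀ s a, IsDist (τ s a)) (hπ : IsPolicy π) (Φ : S → ℝ) (t : ℕ) :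
    expect3 (stateDist τ μ0 π t) π τ (fun _ _ s' => Φ s') =
      expect3 (stateDist τ μ0 π (t + 1)) π τ (fun s _ _ => Φ s) := by
  rw [expect3_snd, expect3_fst hπ hτ]
  rfl

lemma J_eq_tsum (R : Reward S A) (π : S → A → ℝ) :
    J τ μ0 γ R π = ∑' t : ℕ, γ ^ t * expect3 (stateDist τ μ0 π t) π τ R := rfl

lemma norm_discounted_expect3_le (hτ : ∀ s a, IsDist (τ s a)) (hμ0 : IsDist μ0)
    (hπ : IsPolicy π) (hγ0 : 0 ≤ γ) {R : Reward S A} {B : ℝ}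
    (hB : ∀ s a s', |R s a s'| ≤ B) (t : ℕ) :
    ‖γ ^ t * expect3 (stateDist τ μ0 π t) π τ R‖ ≤ B * γ ^ t := by
  rw [Real.norm_eq_abs, abs_mul, abs_of_nonneg (pow_nonneg hγ0 t), mul_comm]
  exact mul_le_mul_of_nonneg_right (abs_expect3_le (isDist_stateDist hτ hμ0 hπ t) hπ hτ hB)
    (pow_nonneg hγ0 t)

lemma summable_discounted_expect3 (hτ : ∀ s a, IsDist (τ s a)) (hμ0 : IsDist μ0)
    (hπ : IsPolicy π) (hγ0 : 0 ≤ γ) (hγ1 : γ < 1) (R : Reward S A) :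
    Summable fun t : ℕ => γ ^ t * expect3 (stateDist τ μ0 π t) π τ R :=
  Summable.of_norm_bounded ((summable_geometric_of_lt_one hγ0 hγ1).mul_left (l2Norm R))
    (norm_discounted_expect3_le hτ hμ0 hπ hγ0 (abs_le_l2Norm R))

lemma abs_J_le (hτ : ∀ s a, IsDist (τ s a)) (hμ0 : IsDist μ0) (hπ : IsPolicy π)
    (hγ0 : 0 ≤ γ) (hγ1 : γ < 1) {R : Reward S A} {B : ℝ} (hB : ∀ s a s', |R s a s'| ≤ B) :
    |J τ μ0 γ R π| ≤ B / (1 - γ) := by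
  rw [div_eq_mul_inv]
  exact tsum_of_norm_bounded ((hasSum_geometric_of_lt_one hγ0 hγ1).mul_left B)
    (norm_discounted_expect3_le hτ hμ0 hπ hγ0 hB)

lemma J_add (hτ : ∀ s a, IsDist (τ s a)) (hμ0 : IsDist μ0) (hπ : IsPolicy π)
    (hγ0 : 0 ≤ γ) (hγ1 : γ < 1) (f g : Reward S A) :
    J τ μ0 γ (f + g) π = J τ μ0 γ f π + J τ μ0 γ g π := by
  simp only [J_eq_tsum, expect3_add, mul_add]
  exact (summable_discounted_expect3 hτ hμ0 hπ hγ0 hγ1 f).tsum_add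
    (summable_discounted_expect3 hτ hμ0 hπ hγ0 hγ1 g)

lemma J_smul (c : ℝ) (R : Reward S A) : J τ μ0 γ (c • R) π = c * J τ μ0 γ R π := by
  simp only [J_eq_tsum, expect3_smul, mul_left_comm _ c, tsum_mul_left]

lemma J_const (hτ : ∀ s a, IsDist (τ s a)) (hμ0 : IsDist μ0) (hπ : IsPolicy π)
    (hγ0 : 0 ≤ γ) (hγ1 : γ < 1) (c : ℝ) :
    J τ μ0 γ (fun _ _ _ => c) π = c / (1 - γ) := by
  simp only [J_eq_tsum, expect3_const (isDist_stateDist hτ hμ0 hπ _) hπ hτ, tsum_mul_right,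
    tsum_geometric_of_lt_one hγ0 hγ1, div_eq_inv_mul]

lemma J_shaping (hτ : ∀ s a, IsDist (τ s a)) (hμ0 : IsDist μ0) (hπ : IsPolicy π)
    (hγ0 : 0 ≤ γ) (hγ1 : γ < 1) (Φ : S → ℝ) :
    J τ μ0 γ (shaping γ Φ) π = -∑ s, μ0 s * Φ s := by
  set b : ℕ → ℝ := fun t => γ ^ t * expect3 (stateDist τ μ0 π t) π τ (fun s _ _ => Φ s)
  have hb : Summable b := summable_discounted_expect3 hτ hμ0 hπ hγ0 hγ1 _
  have hterm : ∀ t, γ ^ t * expect3 (stateDist τ μ0 π t) π τ (shaping γ Φ) = b (t + 1) - b t := by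
    intro t
    simp only [b, expect3_shaping, expect3_stateDist_snd hτ hπ, pow_succ]
    ring
  simp only [J_eq_tsum, hterm]
  rw [tsum_succ_sub_eq_neg hb]
  simp only [b, pow_zero, one_mul, expect3_fst hπ hτ]
  rfl

lemma J_sub_le_of_abs_sub_smul_le (hτ : ∀ s a, IsDist (τ s a)) (hμ0 : IsDist μ0)
    {π1 π2 : S → A → ℝ} (hπ1 : IsPolicy π1) (hπ2 : IsPolicy π2) (hγ0 : 0 ≤ γ) (hγ1 : γ < 1)
    {f g : Reward S A} {c B : ℝ} (hc : 0 ≤ c) (hg : J τ μ0 γ g π1 ≤ J τ μ0 γ g π2)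
    (hB : ∀ s a s', |(f - c • g) s a s'| ≤ B) :
    J τ μ0 γ f π1 - J τ μ0 γ f π2 ≤ 2 * B / (1 - γ) := by
  have hsplit : ∀ π, IsPolicy π → J τ μ0 γ f π = J τ μ0 γ (f - c • g) π + c * J τ μ0 γ g π :=
    fun π hπ => by rw [← J_smul, ← J_add hτ hμ0 hπ hγ0 hγ1, sub_add_cancel]
  have h1 := abs_le.1 (abs_J_le hτ hμ0 hπ1 hγ0 hγ1 hB)
  have h2 := abs_le.1 (abs_J_le hτ hμ0 hπ2 hγ0 hγ1 hB)
  have hcg := mul_le_mul_of_nonneg_left hg hc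
  rw [hsplit π1 hπ1, hsplit π2 hπ2, mul_div_assoc, two_mul]
  linarith

end PolicyEvaluation

section Epic

variable {S A : Type*} [Fintype S] [Fintype A] {DS : S → ℝ} {DA : A → ℝ} {γ : ℝ}

noncomputable def epicPotential (DS : S → ℝ) (DA : A → ℝ) (R : Reward S A) (s : S) : ℝ :=
  ∑ a, ∑ s', DA a * DS s' * R s a s'

lemma CEpic_eq (R : Reward S A) :
    CEpic DS DA γ R =
      R + shaping γ (epicPotential DS DA R) + fun _ _ _ => -(γ * meanD DS DA R) := by
  funext s a s'
  simp only [CEpic, epicPotential, meanD, shaping, Pi.add_apply]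
  ring

lemma meanD_eq_expect3 (f : Reward S A) :
    meanD DS DA f = expect3 DS (fun _ => DA) (fun _ _ => DS) f := rfl

lemma meanD_eq_sum_epicPotential (R : Reward S A) :
    meanD DS DA R = ∑ s, DS s * epicPotential DS DA R s := by
  simp only [meanD, epicPotential, Finset.mul_sum, mul_assoc]

lemma abs_epicPotential_le (hDS : IsDist DS) (hDA : IsDist DA) {R : Reward S A} {B : ℝ}
    (hR : ∀ s a s', |R s a s'| ≤ B) (s : S) : |epicPotential DS DA R s| ≤ B := by
  simp only [epicPotential, mul_assoc, ← Finset.mul_sum]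
  exact hDA.abs_sum_mul_le fun a => hDS.abs_sum_mul_le (hR s a)

lemma meanD_CEpic (hDS : IsDist DS) (hDA : IsDist DA) (R : Reward S A) :
    meanD DS DA (CEpic DS DA γ R) = 0 := by
  have hsnd : meanD DS DA (fun _ _ s' => epicPotential DS DA R s') = meanD DS DA R := by
    rw [meanD_eq_expect3, expect3_eq_nested]
    simp only [hDS.sum_mul_const, hDA.sum_mul_const]
    exact (meanD_eq_sum_epicPotential R).symm
  have hfst : meanD DS DA (fun s _ _ => epicPotential DS DA R s) = meanD DS DA R := by
    rw [meanD_eq_expect3, expect3_fst (fun _ => hDA) (fun _ _ => hDS),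
      meanD_eq_sum_epicPotential]
  rw [CEpic_eq]
  simp only [meanD_eq_expect3, expect3_add, expect3_shaping,
    expect3_const hDS (fun _ => hDA) (fun _ _ => hDS)] at hsnd hfst ⊢
  rw [hsnd, hfst]
  ring

lemma J_CEpic {τ : S → A → S → ℝ} {μ0 : S → ℝ} {π : S → A → ℝ}
    (hτ : ∀ s a, IsDist (τ s a)) (hμ0 : IsDist μ0) (hπ : IsPolicy π)
    (hγ0 : 0 ≤ γ) (hγ1 : γ < 1) (R : Reward S A) :
    J τ μ0 γ (CEpic DS DA γ R) π =
      J τ μ0 γ R π - ∑ s, μ0 s * epicPotential DS DA R s - γ * meanD DS DA R / (1 - γ) := by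
  rw [CEpic_eq, J_add hτ hμ0 hπ hγ0 hγ1, J_add hτ hμ0 hπ hγ0 hγ1,
    J_shaping hτ hμ0 hπ hγ0 hγ1, J_const hτ hμ0 hπ hγ0 hγ1]
  ring

lemma J_CEpic_sub {τ : S → A → S → ℝ} {μ0 : S → ℝ} {π1 π2 : S → A → ℝ}
    (hτ : ∀ s a, IsDist (τ s a)) (hμ0 : IsDist μ0) (hπ1 : IsPolicy π1) (hπ2 : IsPolicy π2)
    (hγ0 : 0 ≤ γ) (hγ1 : γ < 1) (R : Reward S A) :
    J τ μ0 γ (CEpic DS DA γ R) π1 - J τ μ0 γ (CEpic DS DA γ R) π2 =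
      J τ μ0 γ R π1 - J τ μ0 γ R π2 := by
  rw [J_CEpic hτ hμ0 hπ1 hγ0 hγ1, J_CEpic hτ hμ0 hπ2 hγ0 hγ1]
  ring

lemma abs_CEpic_le (hDS : IsDist DS) (hDA : IsDist DA) (hγ0 : 0 ≤ γ) (hγ1 : γ ≤ 1)
    {R : Reward S A} {B : ℝ} (hR : ∀ s a s', |R s a s'| ≤ B) (s : S) (a : A) (s' : S) :
    |CEpic DS DA γ R s a s'| ≤ 4 * B := by
  have hΦ' := abs_le.1 (abs_epicPotential_le hDS hDA hR s')
  have hΦ := abs_le.1 (abs_epicPotential_le hDS hDA hR s)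
  have hm := abs_le.1 (abs_expect3_le hDS (fun _ => hDA) (fun _ _ => hDS) hR)
  have hR' := abs_le.1 (hR s a s')
  simp only [CEpic_eq, shaping, Pi.add_apply, meanD_eq_expect3]
  exact abs_le.2 ⟨by nlinarith, by nlinarith⟩

end Epic

section WeightedNorm

variable {S A : Type*} [Fintype S] [Fintype A] {DS : S → ℝ} {DA : A → ℝ}

lemma l2NormD_nonneg (f : Reward S A) : 0 ≤ l2NormD DS DA f := Real.sqrt_nonneg _

lemma sq_l2NormD (hDS : ∀ s, 0 ≤ DS s) (hDA : ∀ a, 0 ≤ DA a) (f : Reward S A) :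
    l2NormD DS DA f ^ 2 =
      expect3 DS (fun _ => DA) (fun _ _ => DS) (fun s a s' => f s a s' ^ 2) :=
  Real.sq_sqrt (expect3_nonneg hDS (fun _ => hDA) (fun _ _ => hDS) fun _ _ _ => sq_nonneg _)

lemma covD_of_meanD_eq_zero {f g : Reward S A} (hf : meanD DS DA f = 0)
    (hg : meanD DS DA g = 0) :
    covD DS DA f g =
      expect3 DS (fun _ => DA) (fun _ _ => DS) (fun s a s' => f s a s' * g s a s') := by
  simp only [covD, hf, hg, sub_zero, expect3, mul_assoc]

lemma varD_of_meanD_eq_zero (hDS : ∀ s, 0 ≤ DS s) (hDA : ∀ a, 0 ≤ DA a) {f : Reward S A}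
    (hf : meanD DS DA f = 0) : varD DS DA f = l2NormD DS DA f ^ 2 := by
  rw [varD, covD_of_meanD_eq_zero hf hf, sq_l2NormD hDS hDA]
  simp only [sq]

lemma l2NormD_le (hDS : IsDist DS) (hDA : IsDist DA) {R : Reward S A} {B : ℝ} (hB : 0 ≤ B)
    (hR : ∀ s a s', |R s a s'| ≤ B) : l2NormD DS DA R ≤ B :=
  Real.sqrt_le_iff.2 ⟨hB, expect3_le hDS (fun _ => hDA) (fun _ _ => hDS) fun s a s' => by
    rw [← sq_abs]
    exact pow_le_pow_left₀ (abs_nonneg _) (hR s a s') 2⟩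

lemma abs_le_l2NormD_div (hDS : ∀ s, 0 ≤ DS s) (hDA : ∀ a, 0 ≤ DA a) {w : ℝ} (hw : 0 < w)
    (R : Reward S A) {s : S} {a : A} {s' : S} (hws : w ≤ DS s * DA a * DS s') :
    |R s a s'| ≤ l2NormD DS DA R / √w := by
  rw [le_div_iff₀ (Real.sqrt_pos.2 hw), mul_comm, ← Real.sqrt_sq_eq_abs, ← Real.sqrt_mul hw.le]
  refine Real.sqrt_le_sqrt ((mul_le_mul_of_nonneg_right hws (sq_nonneg _)).trans ?_)
  exact mul_le_expect3 hDS (fun _ => hDA) (fun _ _ => hDS) (fun _ _ _ => sq_nonneg _) s a s'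

lemma expect3_sub_smul_sq {p : S → ℝ} {q : S → A → ℝ} {r : S → A → S → ℝ}
    (f g : Reward S A) (c : ℝ) :
    expect3 p q r (fun s a s' => (f - c • g) s a s' ^ 2) =
      expect3 p q r (fun s a s' => f s a s' ^ 2)
        - 2 * c * expect3 p q r (fun s a s' => f s a s' * g s a s')
        + c ^ 2 * expect3 p q r (fun s a s' => g s a s' ^ 2) := by
  simp only [expect3, Pi.sub_apply, Pi.smul_apply, smul_eq_mul, Finset.mul_sum,
    ← Finset.sum_sub_distrib, ← Finset.sum_add_distrib]
  exact Finset.sum_congr rfl fun _ _ => Finset.sum_congr rfl fun _ _ =>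
    Finset.sum_congr rfl fun _ _ => by ring

/-- `x = ‖f‖`, `y = ‖g‖`, `z = ⟨f, g⟩`: the law of cosines for `f - (‖f‖ / ‖g‖) • g`. -/
lemma sq_sub_div_mul_add_eq {x y z : ℝ} (hy : y ≠ 0) :
    x ^ 2 - 2 * (x / y) * z + (x / y) ^ 2 * y ^ 2 = (2 * x) ^ 2 * ((1 - z / (x * y)) / 2) := by
  rcases eq_or_ne x 0 with rfl | hx
  · simp
  · field_simp
    ring

lemma l2NormD_sub_smul_eq (hDS : ∀ s, 0 ≤ DS s) (hDA : ∀ a, 0 ≤ DA a) {f g : Reward S A}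
    (hf : meanD DS DA f = 0) (hg : meanD DS DA g = 0) (hg0 : varD DS DA g ≠ 0) :
    l2NormD DS DA (f - (l2NormD DS DA f / l2NormD DS DA g) • g) =
      2 * l2NormD DS DA f * √((1 - pearsonD DS DA f g) / 2) := by
  have hng : l2NormD DS DA g ≠ 0 := fun h => hg0 (by rw [varD_of_meanD_eq_zero hDS hDA hg, h]; ring)
  have hρ : pearsonD DS DA f g =
      covD DS DA f g / (l2NormD DS DA f * l2NormD DS DA g) := by
    rw [pearsonD, varD_of_meanD_eq_zero hDS hDA hf, varD_of_meanD_eq_zero hDS hDA hg,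
      Real.sqrt_sq (l2NormD_nonneg f), Real.sqrt_sq (l2NormD_nonneg g)]
  rw [l2NormD, ← expect3, expect3_sub_smul_sq, ← sq_l2NormD hDS hDA, ← sq_l2NormD hDS hDA,
    ← covD_of_meanD_eq_zero hf hg, sq_sub_div_mul_add_eq hng, ← hρ,
    Real.sqrt_mul (sq_nonneg _), Real.sqrt_sq (mul_nonneg zero_le_two (l2NormD_nonneg f))]

end WeightedNorm

/-- generalised EPIC regret bound. -/
theorem epic_generalised_regret_bound
    {S A : Type*} [Fintype S] [Fintype A] [Nonempty S] [Nonempty A]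
    (γ : ℝ) (hγ : γ ∈ Set.Ioo (0 : ℝ) 1)
    (DS : S → ℝ) (hDS : IsDist DS) (hDSpos : ∀ s, 0 < DS s)
    (DA : A → ℝ) (hDA : IsDist DA) (hDApos : ∀ a, 0 < DA a) :
    ∃ U : ℝ, 0 < U ∧
      ∀ (τ : S → A → S → ℝ), (∀ s a, IsDist (τ s a)) →
      ∀ (μ0 : S → ℝ), IsDist μ0 →
      ∀ R1 R2 : Reward S A,
        varD DS DA (CEpic DS DA γ R1) ≠ 0 →
        varD DS DA (CEpic DS DA γ R2) ≠ 0 →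
        ∀ π1 π2 : Policy S A,
          J τ μ0 γ R2 π1.1 ≤ J τ μ0 γ R2 π2.1 →
          J τ μ0 γ R1 π1.1 - J τ μ0 γ R1 π2.1 ≤
            U * l2Norm R1 * DEpic DS DA γ R1 R2 := by
  obtain ⟨hγ0, hγ1⟩ := hγ
  obtain ⟨x₀, hx₀⟩ := Finite.exists_min fun x : S × A × S => DS x.1 * DA x.2.1 * DS x.2.2
  set w := DS x₀.1 * DA x₀.2.1 * DS x₀.2.2
  have hw : 0 < w := mul_pos (mul_pos (hDSpos _) (hDApos _)) (hDSpos _)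
  have hden : 0 < (1 - γ) * √w := mul_pos (sub_pos.2 hγ1) (Real.sqrt_pos.2 hw)
  refine ⟨16 / ((1 - γ) * √w), div_pos (by norm_num) hden, ?_⟩
  intro τ hτ μ0 hμ0 R1 R2 _ hvar2 π1 π2 hJ2
  set C1 := CEpic DS DA γ R1
  set C2 := CEpic DS DA γ R2
  set c := l2NormD DS DA C1 / l2NormD DS DA C2
  have hC2 : J τ μ0 γ C2 π1.1 ≤ J τ μ0 γ C2 π2.1 := by
    linarith [J_CEpic_sub (DS := DS) (DA := DA) hτ hμ0 π1.2 π2.2 hγ0.le hγ1 R2]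
  have hregret : J τ μ0 γ C1 π1.1 - J τ μ0 γ C1 π2.1 ≤
      2 * (l2NormD DS DA (C1 - c • C2) / √w) / (1 - γ) :=
    J_sub_le_of_abs_sub_smul_le hτ hμ0 π1.2 π2.2 hγ0.le hγ1
      (div_nonneg (l2NormD_nonneg C1) (l2NormD_nonneg C2)) hC2
      fun s a s' => abs_le_l2NormD_div hDS.1 hDA.1 hw _ (hx₀ (s, a, s'))
  have hG : l2NormD DS DA (C1 - c • C2) = 2 * l2NormD DS DA C1 * DEpic DS DA γ R1 R2 :=
    l2NormD_sub_smul_eq hDS.1 hDA.1 (meanD_CEpic hDS hDA R1) (meanD_CEpic hDS hDA R2) hvar2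
  have hC1 : l2NormD DS DA C1 ≤ 4 * l2Norm R1 :=
    l2NormD_le hDS hDA (mul_nonneg zero_le_four (Real.sqrt_nonneg _))
      (abs_CEpic_le hDS hDA hγ0.le hγ1.le (abs_le_l2Norm R1))
  have hD : 0 ≤ DEpic DS DA γ R1 R2 := Real.sqrt_nonneg _
  rw [← J_CEpic_sub hτ hμ0 π1.2 π2.2 hγ0.le hγ1 R1]
  calc J τ μ0 γ C1 π1.1 - J τ μ0 γ C1 π2.1
      ≤ 4 * l2NormD DS DA C1 * DEpic DS DA γ R1 R2 / ((1 - γ) * √w) := by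
        rw [hG] at hregret
        convert hregret using 1
        field_simp
        ring
    _ ≤ 4 * (4 * l2Norm R1) * DEpic DS DA γ R1 R2 / ((1 - γ) * √w) := by gcongr
    _ = 16 / ((1 - γ) * √w) * l2Norm R1 * DEpic DS DA γ R1 R2 := by ring

end RewardPaper
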